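/- Let k > 8 be an integer such that k^{1/4} is a natural number. Let (G,𝒳,k) be a Yes-instance of EDP where G is a split graph, and let 𝒫 be a minimum solution of (G,𝒳,k). Then every path P ∈ 𝒫 satisfies |E(P)| < 4√k + 4. -/

import Mathlib

open SimpleGraph Finset

/-- A family of walks in `G` connecting the terminal pairs `X`. -/
abbrev WalkFamily {V : Type*} (G : SimpleGraph V) {ι : Type*} (X : ι → V × V) :=
  ∀ i : ι, G.Walk (X i).1 (X i).2

/-- The walks in the family are pairwise edge-disjoint. -/
def PairwiseEdgeDisjoint {V : Type*} (G : SimpleGraph V) {ι : Type*} (X : ι → V × V)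
    (P : WalkFamily G X) : Prop :=
  ∀ i j : ι, i ≠ j → ∀ e : Sym2 V, e ∈ (P i).edges → e ∉ (P j).edges

/-- A solution of the Edge-Disjoint Paths (EDP) instance `(G, X)`: a family of paths
connecting the terminal pairs that are pairwise edge-disjoint. -/
def IsEDPSolution {V : Type*} (G : SimpleGraph V) {ι : Type*} (X : ι → V × V)
    (P : WalkFamily G X) : Prop :=
  (∀ i, (P i).IsPath) ∧ PairwiseEdgeDisjoint G X P

/-- `(G, X)` is a Yes-instance of EDP. -/
def EDPYes {V : Type*} (G : SimpleGraph V) {ι : Type*} (X : ι → V × V) : Prop :=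
  ∃ P : WalkFamily G X, IsEDPSolution G X P

/-- A minimum solution of the EDP instance `(G, X)`: a solution minimizing the total
number of edges of the paths. -/
def IsMinEDPSolution {V : Type*} (G : SimpleGraph V) {ι : Type*} [Fintype ι]
    (X : ι → V × V) (P : WalkFamily G X) : Prop :=
  IsEDPSolution G X P ∧
    ∀ Q : WalkFamily G X, IsEDPSolution G X Q →
      ∑ i, (P i).length ≤ ∑ i, (Q i).length

/-- `(C, I)` is a split partition of `G`: `V(G)` is the disjoint union of `C` and `I`,
`C` induces a clique, and `I` is an independent set. -/
def IsSplitPartition {V : Type*} (G : SimpleGraph V) (C I : Finset V) : Prop :=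
  (∀ x : V, x ∈ C ∨ x ∈ I) ∧ (∀ x : V, ¬ (x ∈ C ∧ x ∈ I)) ∧
  (∀ x ∈ C, ∀ y ∈ C, x ≠ y → G.Adj x y) ∧ (∀ x ∈ I, ∀ y ∈ I, ¬ G.Adj x y)

/-!
Let `P i` have at least `4N + 4` edges, where `k = N²`. Every edge has an endpoint in the clique
`C`, so `P i` visits at least `2N + 2` vertices of `C`; take its first `N + 1` and its last `N + 1`
such vertices. By minimality each of the `(N + 1)²` clique edges from an early to a late vertex
is used by some path, for otherwise `P i` could be shortcut through it. Distinct such edges are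
used by distinct paths. `P i` itself can only use one of them, as one of its own edges. Another
path `P j` cannot use an edge `xy` and also visit a vertex `z` of `P i` strictly between `x` and
`y`: shortcutting `P i` through `xy` and rerouting `P j` along `P i` from `x` to `y` keeps the
total length, but the new `P j` passes twice through `z` and can be shortened. Hence
`(N + 1)² ≤ k = N²`.
-/

namespace SimpleGraph.Walk

variable {V : Type*} {G : SimpleGraph V} {u v w : V}

lemma length_bypass_lt_of_not_isPath [DecidableEq V] {p : G.Walk u v} (hp : ¬ p.IsPath) :
    p.bypass.length < p.length :=
  p.length_bypass_le_length.lt_of_ne fun h =>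
    hp (p.bypass_eq_self_of_length_le_length_bypass h.ge ▸ p.bypass_isPath)

lemma not_isPath_append_of_mem_support {p : G.Walk u v} {q : G.Walk v w} {x : V}
    (hp : x ∈ p.support) (hq : x ∈ q.support) (hxv : x ≠ v) : ¬ (p.append q).IsPath :=
  fun h => h.ne_of_mem_support_of_append hxv hp hq rfl

lemma IsPath.getVert_eq_getVert_iff {p : G.Walk u v} (hp : p.IsPath) {a b : ℕ}
    (ha : a ≤ p.length) (hb : b ≤ p.length) : p.getVert a = p.getVert b ↔ a = b :=
  ⟨fun h => hp.getVert_injOn ha hb h, congrArg p.getVert⟩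

lemma IsPath.succ_eq_of_mem_edges {p : G.Walk u v} (hp : p.IsPath) {a b : ℕ} (hab : a < b)
    (hb : b ≤ p.length) (he : s(p.getVert a, p.getVert b) ∈ p.edges) : b = a + 1 := by
  obtain ⟨t, ht, hte⟩ := p.mk_mem_edges_iff_exists.1 he
  rcases Sym2.eq_iff.1 hte with ⟨h₁, h₂⟩ | ⟨h₁, h₂⟩
  · rw [hp.getVert_eq_getVert_iff (by omega) (by omega)] at h₁ h₂
    omega
  · rw [hp.getVert_eq_getVert_iff (by omega) (by omega)] at h₁ h₂
    omega

lemma mem_support_take_or_mem_support_drop {p : G.Walk u v} {x : V} (hx : x ∈ p.support)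
    (r : ℕ) (hr : x ≠ p.getVert r) (hr' : x ≠ p.getVert (r + 1)) :
    x ∈ (p.take r).support ∨ x ∈ (p.drop (r + 1)).support := by
  obtain ⟨q, rfl, hq⟩ := mem_support_iff_exists_getVert.1 hx
  rcases lt_or_gt_of_ne (show q ≠ r by rintro rfl; exact hr rfl) with h | h
  · left
    simpa [h.le] using (p.take r).getVert_mem_support q
  · right
    have hq : q = r + 1 + (q - (r + 1)) := by
      have : q ≠ r + 1 := by rintro rfl; exact hr' rfl
      omega
    have := (p.drop (r + 1)).getVert_mem_support (q - (r + 1))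
    rwa [drop_getVert, ← hq] at this

def shortcut (p : G.Walk u v) (α β : ℕ) (h : G.Adj (p.getVert α) (p.getVert β)) : G.Walk u v :=
  (p.take α).append (cons h (p.drop β))

lemma length_shortcut (p : G.Walk u v) {α β : ℕ} (h : G.Adj (p.getVert α) (p.getVert β))
    (hα : α ≤ p.length) : (p.shortcut α β h).length = α + 1 + (p.length - β) := by
  simp only [shortcut, length_append, take_length, hα, inf_of_le_left, length_cons, drop_length]
  omega

lemma mem_edges_shortcut (p : G.Walk u v) {α β : ℕ} (h : G.Adj (p.getVert α) (p.getVert β))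
    {f : Sym2 V} : f ∈ (p.shortcut α β h).edges ↔
      f = s(p.getVert α, p.getVert β) ∨ f ∈ p.edges.take α ++ p.edges.drop β := by
  simp only [shortcut, edges_append, edges_cons, edges_take, edges_drop, List.mem_append,
    List.mem_cons]
  tauto

lemma mem_edges_of_mem_take_append_drop {p : G.Walk u v} {α β : ℕ} {f : Sym2 V}
    (hf : f ∈ p.edges.take α ++ p.edges.drop β) : f ∈ p.edges :=
  (List.mem_append.1 hf).elim List.mem_of_mem_take List.mem_of_mem_drop

def segment (p : G.Walk u v) {α β : ℕ} (h : α ≤ β) : G.Walk (p.getVert α) (p.getVert β) :=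
  ((p.drop α).take (β - α)).copy rfl (by simp [h])

lemma length_segment (p : G.Walk u v) {α β : ℕ} (h : α ≤ β) (hβ : β ≤ p.length) :
    (p.segment h).length = β - α := by
  simp only [segment, length_copy, take_length, drop_length, inf_eq_left, tsub_le_iff_right]
  omega

lemma edges_segment (p : G.Walk u v) {α β : ℕ} (h : α ≤ β) :
    (p.segment h).edges = (p.edges.drop α).take (β - α) := by
  simp [segment, edges_take, edges_drop]

lemma getVert_mem_support_segment (p : G.Walk u v) {α β γ : ℕ} (h : α ≤ β) (hαγ : α ≤ γ)
    (hγβ : γ ≤ β) : p.getVert γ ∈ (p.segment h).support := by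
  have := ((p.drop α).take (β - α)).getVert_mem_support (γ - α)
  simpa [segment, show min (β - α) (γ - α) = γ - α by omega, show α + (γ - α) = γ by omega]
    using this

lemma IsTrail.disjoint_edges_segment {p : G.Walk u v} (hp : p.IsTrail) {α β : ℕ} (h : α ≤ β) :
    (p.segment h).edges.Disjoint (p.edges.take α ++ p.edges.drop β) := by
  have hsplit : p.edges = p.edges.take α ++ ((p.edges.drop α).take (β - α) ++
      (p.edges.drop α).drop (β - α)) := by
    simp only [List.take_append_drop]
  have hnodup := hp.edges_nodup
  rw [hsplit, List.drop_drop, show α + (β - α) = β by omega] at hnodup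
  rw [edges_segment]
  intro f hf hf'
  rcases List.mem_append.1 hf' with hf' | hf'
  · exact List.disjoint_of_nodup_append hnodup hf' (List.mem_append_left _ hf)
  · exact List.disjoint_of_nodup_append (List.nodup_append.1 hnodup).2.1 hf hf'

lemma exists_walk_length_eq_of_sym2_eq {a b : V} (S : G.Walk u v) (h : s(a, b) = s(u, v)) :
    ∃ S' : G.Walk a b, S'.length = S.length ∧ (∀ f, f ∈ S'.edges ↔ f ∈ S.edges) ∧
      ∀ x, x ∈ S'.support ↔ x ∈ S.support := by
  rcases Sym2.eq_iff.1 h with ⟨rfl, rfl⟩ | ⟨rfl, rfl⟩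
  · exact ⟨S, rfl, fun _ => Iff.rfl, fun _ => Iff.rfl⟩
  · exact ⟨S.reverse, by simp, by simp, by simp⟩

lemma IsTrail.exists_not_isPath_of_replace_edge {p : G.Walk u v} (hp : p.IsTrail) {a b x : V}
    (he : s(a, b) ∈ p.edges) (S : G.Walk a b) (hxp : x ∈ p.support) (hxS : x ∈ S.support)
    (hxa : x ≠ a) (hxb : x ≠ b) :
    ∃ p' : G.Walk u v, p'.length + 1 = p.length + S.length ∧
      (∀ f ∈ p'.edges, f ∈ S.edges ∨ (f ∈ p.edges ∧ f ≠ s(a, b))) ∧ ¬ p'.IsPath := by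
  obtain ⟨r, hr, hre⟩ := p.mk_mem_edges_iff_exists.1 he
  obtain ⟨S', hS'len, hS'edges, hS'supp⟩ := exists_walk_length_eq_of_sym2_eq S hre
  have hxr : x ≠ p.getVert r ∧ x ≠ p.getVert (r + 1) := by
    rcases Sym2.eq_iff.1 hre with ⟨h₁, h₂⟩ | ⟨h₁, h₂⟩ <;> rw [h₁, h₂] <;> tauto
  refine ⟨(p.take r).append (S'.append (p.drop (r + 1))), ?_, ?_, ?_⟩
  · simp only [length_append, take_length, hr.le, inf_of_le_left, hS'len, drop_length]
    omega
  · have hr' : r < p.edges.length := by simpa using hr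
    have hdecomp : p.edges = p.edges.take r ++ s(a, b) :: p.edges.drop (r + 1) := by
      rw [← hre, ← getElem_edges hr', ← List.drop_eq_getElem_cons, List.take_append_drop]
    have hnodup := hp.edges_nodup
    rw [hdecomp] at hnodup
    intro f hf
    simp only [edges_append, edges_take, edges_drop, List.mem_append] at hf
    rcases hf with hf | hf | hf
    · exact Or.inr ⟨List.mem_of_mem_take hf, by
        rintro rfl; exact List.disjoint_of_nodup_append hnodup hf List.mem_cons_self⟩
    · exact Or.inl ((hS'edges f).1 hf)
    · exact Or.inr ⟨List.mem_of_mem_drop hf, by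
        rintro rfl; exact (List.nodup_cons.1 (List.nodup_append.1 hnodup).2.1).1 hf⟩
  · have hxS' := (hS'supp x).2 hxS
    rcases mem_support_take_or_mem_support_drop hxp r hxr.1 hxr.2 with h | h
    · exact not_isPath_append_of_mem_support h
        ((mem_support_append_iff _ _).2 (Or.inl hxS')) hxr.1
    · rw [append_assoc]
      exact not_isPath_append_of_mem_support
        ((mem_support_append_iff _ _).2 (Or.inr hxS')) h hxr.2

end SimpleGraph.Walk

lemma Finset.exists_lt_subsets_card_eq {α : Type*} [LinearOrder α] (T : Finset α) {m : ℕ}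
    (h : 2 * m ≤ #T) :
    ∃ A ⊆ T, ∃ B ⊆ T, #A = m ∧ #B = m ∧ ∀ a ∈ A, ∀ b ∈ B, a < b := by
  set e := T.orderEmbOfFin rfl
  have he : ∀ {f : Fin m → Fin #T}, Function.Injective f → #(univ.image (e ∘ f)) = m :=
    fun hf => by rw [card_image_of_injective _ (e.injective.comp hf), card_fin]
  refine ⟨univ.image (e ∘ fun j : Fin m => ⟨j, by omega⟩), ?_,
    univ.image (e ∘ fun j : Fin m => ⟨#T - m + j, by omega⟩), ?_,
    he fun j j' hj => by simpa [Fin.ext_iff] using hj,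
    he fun j j' hj => by simpa [Fin.ext_iff] using hj, ?_⟩
  · exact image_subset_iff.2 fun j _ => T.orderEmbOfFin_mem rfl _
  · exact image_subset_iff.2 fun j _ => T.orderEmbOfFin_mem rfl _
  · simp only [mem_image, mem_univ, true_and, Function.comp_apply]
    rintro _ ⟨j, rfl⟩ _ ⟨j', rfl⟩
    exact e.strictMono (Fin.mk_lt_mk.2 (by omega))

lemma le_two_mul_card_filter_range {p : ℕ → Prop} [DecidablePred p] {n : ℕ}
    (hp : ∀ t < n, p t ∨ p (t + 1)) : n ≤ 2 * #{t ∈ range (n + 1) | p t} := by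
  induction n using Nat.twoStepInduction with
  | zero => simp
  | one =>
    have : 0 < #{t ∈ range (1 + 1) | p t} := by
      rcases hp 0 one_pos with h | h
      · exact card_pos.2 ⟨0, by simp [h]⟩
      · exact card_pos.2 ⟨1, by simp [h]⟩
    omega
  | more n ih _ =>
    have hsub : {t ∈ range (n + 1) | p t} ⊂ {t ∈ range (n + 2 + 1) | p t} := by
      refine (ssubset_iff_of_subset (filter_subset_filter _ (range_subset_range.2 (by omega)))).2 ?_
      rcases hp (n + 1) (by omega) with h | h
      · exact ⟨n + 1, by simp [h], by simp⟩
      · exact ⟨n + 2, by simp [h], by simp⟩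
    have := card_lt_card hsub
    have := ih fun t ht => hp t (by omega)
    omega

section EDP

variable {V : Type*} {G : SimpleGraph V} {ι : Type*} {X : ι → V × V}

lemma IsSplitPartition.isClique {C I : Finset V} (h : IsSplitPartition G C I) :
    G.IsClique (C : Set V) :=
  fun x hx y hy hxy => h.2.2.1 x hx y hy hxy

lemma IsSplitPartition.mem_or_mem_of_adj {C I : Finset V} (h : IsSplitPartition G C I)
    {x y : V} (hxy : G.Adj x y) : x ∈ C ∨ y ∈ C := by
  rcases h.1 x with hx | hx
  · exact Or.inl hx
  rcases h.1 y with hy | hy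
  · exact Or.inr hy
  exact (h.2.2.2 x hx y hy hxy).elim

lemma PairwiseEdgeDisjoint.of_eq_of_notMem {P Q : WalkFamily G X}
    (hP : PairwiseEdgeDisjoint G X P) {S : Set ι} (hQP : ∀ c ∉ S, Q c = P c)
    (hout : ∀ c ∈ S, ∀ d ∉ S, ∀ e ∈ (Q c).edges, e ∉ (P d).edges)
    (hin : ∀ c ∈ S, ∀ d ∈ S, c ≠ d → ∀ e ∈ (Q c).edges, e ∉ (Q d).edges) :
    PairwiseEdgeDisjoint G X Q := by
  intro c d hcd e hc hd
  by_cases hcS : c ∈ S <;> by_cases hdS : d ∈ S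
  · exact hin c hcS d hdS hcd e hc hd
  · rw [hQP d hdS] at hd
    exact hout c hcS d hdS e hc hd
  · rw [hQP c hcS] at hc
    exact hout d hdS c hcS e hd hc
  · rw [hQP c hcS] at hc
    rw [hQP d hdS] at hd
    exact hP c d hcd e hc hd

lemma sum_length_update [Fintype ι] [DecidableEq ι] (P : WalkFamily G X) (i : ι)
    (W : G.Walk (X i).1 (X i).2) :
    ∑ c, (Function.update P i W c).length + (P i).length = ∑ c, (P c).length + W.length := by
  simp_rw [Function.apply_update (fun c (w : G.Walk (X c).1 (X c).2) => w.length)]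
  rw [sum_update_of_mem (mem_univ i), sum_eq_add_sum_sdiff_singleton_of_mem (mem_univ i)]
  ring

namespace IsMinEDPSolution

variable [Fintype ι] {P : WalkFamily G X}

open Walk

lemma sum_length_le_sum_length_bypass [DecidableEq V] (hP : IsMinEDPSolution G X P)
    {Q : WalkFamily G X} (hQ : PairwiseEdgeDisjoint G X Q) :
    ∑ c, (P c).length ≤ ∑ c, (Q c).bypass.length :=
  hP.2 _ ⟨fun c => (Q c).bypass_isPath, fun c d hcd e hc hd =>
    hQ c d hcd e ((Q c).edges_bypass_subset_edges hc) ((Q d).edges_bypass_subset_edges hd)⟩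

lemma length_le_of_update (hP : IsMinEDPSolution G X P) {i : ι} (W : G.Walk (X i).1 (X i).2)
    (hW : ∀ e ∈ W.edges, ∀ c, c ≠ i → e ∉ (P c).edges) : (P i).length ≤ W.length := by
  classical
  have hdisj : PairwiseEdgeDisjoint G X (Function.update P i W) :=
    hP.1.2.of_eq_of_notMem (S := {i}) (fun c hc => Function.update_of_ne hc _ _)
      (by rintro c rfl d hd e he; exact hW e (by simpa using he) d hd)
      (by rintro c rfl d rfl h; exact absurd rfl h)
  have hbypass := Finset.sum_le_sum fun c (_ : c ∈ univ) =>
    (Function.update P i W c).length_bypass_le_length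
  have := hP.sum_length_le_sum_length_bypass hdisj
  have := sum_length_update P i W
  omega

lemma length_add_length_lt_of_update₂ (hP : IsMinEDPSolution G X P) {i j : ι} (hij : i ≠ j)
    (Wi : G.Walk (X i).1 (X i).2) (Wj : G.Walk (X j).1 (X j).2)
    (hWi : ∀ e ∈ Wi.edges, ∀ c, c ≠ i → c ≠ j → e ∉ (P c).edges)
    (hWj : ∀ e ∈ Wj.edges, ∀ c, c ≠ i → c ≠ j → e ∉ (P c).edges)
    (hWij : ∀ e ∈ Wi.edges, e ∉ Wj.edges) (hWj_path : ¬ Wj.IsPath) :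
    (P i).length + (P j).length < Wi.length + Wj.length := by
  classical
  set Q := Function.update (Function.update P i Wi) j Wj
  have hQi : Q i = Wi := by simp [Q, hij]
  have hQj : Q j = Wj := by simp [Q]
  have hdisj : PairwiseEdgeDisjoint G X Q := by
    refine hP.1.2.of_eq_of_notMem (S := {i, j}) (fun c hc => ?_) ?_ ?_
    · simp only [Set.mem_insert_iff, Set.mem_singleton_iff, not_or] at hc
      simp [Q, hc.1, hc.2]
    · rintro c (rfl | rfl) d hd <;> simp only [Set.mem_insert_iff, Set.mem_singleton_iff,
        not_or] at hd
      · rw [hQi]; exact fun e he => hWi e he d hd.1 hd.2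
      · rw [hQj]; exact fun e he => hWj e he d hd.1 hd.2
    · rintro c (rfl | rfl) d (rfl | rfl) hcd <;> try exact absurd rfl hcd
      · rw [hQi, hQj]; exact hWij
      · rw [hQi, hQj]; exact fun e he he' => hWij e he' he
  have hbypass : ∑ c, (Q c).bypass.length < ∑ c, (Q c).length :=
    Finset.sum_lt_sum (fun c _ => (Q c).length_bypass_le_length)
      ⟨j, mem_univ j, by rw [hQj]; exact length_bypass_lt_of_not_isPath hWj_path⟩
  have hsumQ : ∑ c, (Q c).length + (P j).length =
      ∑ c, (Function.update P i Wi c).length + Wj.length := by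
    rw [← Function.update_of_ne hij.symm Wi P]
    exact sum_length_update _ j Wj
  have := hP.sum_length_le_sum_length_bypass hdisj
  have := sum_length_update P i Wi
  omega

lemma exists_mem_edges_of_adj (hP : IsMinEDPSolution G X P) (i : ι) {α β : ℕ} (hαβ : α < β)
    (hβ : β ≤ (P i).length) (hadj : G.Adj ((P i).getVert α) ((P i).getVert β)) :
    ∃ j, s((P i).getVert α, (P i).getVert β) ∈ (P j).edges := by
  by_contra! hunused
  have hle := hP.length_le_of_update ((P i).shortcut α β hadj) fun e he c hc => by
    rcases (mem_edges_shortcut _ _).1 he with rfl | he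
    · exact hunused c
    · exact hP.1.2 i c hc.symm e (mem_edges_of_mem_take_append_drop he)
  rw [length_shortcut _ _ (by omega)] at hle
  obtain rfl : β = α + 1 := by omega
  exact hunused i ((P i).mk_mem_edges_iff_exists.2 ⟨α, hβ, rfl⟩)

lemma getVert_notMem_support_of_mem_edges (hP : IsMinEDPSolution G X P) {i j : ι} (hji : j ≠ i)
    {α γ β : ℕ} (hαγ : α < γ) (hγβ : γ < β) (hβ : β ≤ (P i).length)
    (he : s((P i).getVert α, (P i).getVert β) ∈ (P j).edges) :
    (P i).getVert γ ∉ (P j).support := by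
  intro hγj
  have hne : ∀ δ ≤ (P i).length, δ ≠ γ → (P i).getVert γ ≠ (P i).getVert δ :=
    fun δ hδ hδγ h => hδγ (((hP.1.1 i).getVert_eq_getVert_iff (by omega) hδ).1 h).symm
  have hαβ : α ≤ β := by omega
  set S := (P i).segment hαβ
  have hSi : ∀ f ∈ S.edges, f ∈ (P i).edges := fun f hf => by
    rw [edges_segment] at hf
    exact List.mem_of_mem_drop (List.mem_of_mem_take hf)
  have hSdisj := (hP.1.1 i).isTrail.disjoint_edges_segment hαβ
  have heP : s((P i).getVert α, (P i).getVert β) ∉ (P i).edges := hP.1.2 j i hji _ he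
  obtain ⟨Wj, hWjlen, hWj, hWj_path⟩ := (hP.1.1 j).isTrail.exists_not_isPath_of_replace_edge
    he S hγj ((P i).getVert_mem_support_segment hαβ hαγ.le hγβ.le)
    (hne α (by omega) (by omega)) (hne β hβ (by omega))
  have hlt := hP.length_add_length_lt_of_update₂ hji.symm
    ((P i).shortcut α β ((P j).adj_of_mem_edges he)) Wj
    (fun f hf c hci hcj => by
      rcases (mem_edges_shortcut _ _).1 hf with rfl | hf
      exacts [hP.1.2 j c hcj.symm _ he,
        hP.1.2 i c hci.symm f (mem_edges_of_mem_take_append_drop hf)])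
    (fun f hf c hci hcj => by
      rcases hWj f hf with hf | ⟨hf, -⟩
      exacts [hP.1.2 i c hci.symm f (hSi f hf), hP.1.2 j c hcj.symm f hf])
    (fun f hf hf' => by
      rcases (mem_edges_shortcut _ _).1 hf with rfl | hf <;>
        rcases hWj _ hf' with hf' | ⟨hf', hne'⟩
      exacts [heP (hSi _ hf'), hne' rfl, hSdisj hf' hf,
        hP.1.2 i j hji.symm f (mem_edges_of_mem_take_append_drop hf) hf'])
    hWj_path
  rw [length_shortcut _ _ (by omega), length_segment _ hαβ hβ] at *
  omega

lemma injOn_of_mem_edges (hP : IsMinEDPSolution G X P) {i : ι} {A B : Finset ℕ}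
    (hAB : ∀ a ∈ A, ∀ b ∈ B, a < b) (hB : ∀ b ∈ B, b ≤ (P i).length) {F : ℕ × ℕ → ι}
    (hF : ∀ p ∈ A ×ˢ B, s((P i).getVert p.1, (P i).getVert p.2) ∈ (P (F p)).edges) :
    Set.InjOn F (A ×ˢ B : Finset (ℕ × ℕ)) := by
  rintro ⟨a, b⟩ hp ⟨a', b'⟩ hp' hFF
  simp only [coe_product, Set.mem_prod, mem_coe] at hp hp'
  have he := hF (a, b) (mem_product.2 hp)
  have he' := hF (a', b') (mem_product.2 hp')
  rw [← hFF] at he'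
  by_cases hj : F (a, b) = i
  · rw [hj] at he he'
    have := (hP.1.1 i).succ_eq_of_mem_edges (hAB a hp.1 b hp.2) (hB b hp.2) he
    have := (hP.1.1 i).succ_eq_of_mem_edges (hAB a' hp'.1 b' hp'.2) (hB b' hp'.2) he'
    have := hAB a hp.1 b' hp'.2
    have := hAB a' hp'.1 b hp.2
    simp only [Prod.mk.injEq]
    omega
  have hnot := fun {α γ β} =>
    hP.getVert_notMem_support_of_mem_edges hj (α := α) (γ := γ) (β := β)
  obtain rfl : a = a' := by
    by_contra hne
    rcases lt_or_gt_of_ne hne with h | h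
    · exact hnot h (hAB a' hp'.1 b hp.2) (hB b hp.2) he (fst_mem_support_of_mem_edges _ he')
    · exact hnot h (hAB a hp.1 b' hp'.2) (hB b' hp'.2) he' (fst_mem_support_of_mem_edges _ he)
  obtain rfl : b = b' := by
    by_contra hne
    rcases lt_or_gt_of_ne hne with h | h
    · exact hnot (hAB a hp.1 b hp.2) h (hB b' hp'.2) he' (snd_mem_support_of_mem_edges _ he)
    · exact hnot (hAB a hp.1 b' hp'.2) h (hB b hp.2) he (snd_mem_support_of_mem_edges _ he')
  rfl

theorem sq_le_card_of_le_length {C : Set V} (hC : G.IsClique C)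
    (hcover : ∀ x y, G.Adj x y → x ∈ C ∨ y ∈ C) (hP : IsMinEDPSolution G X P) (i : ι) {N : ℕ}
    (hN : 4 * N + 4 ≤ (P i).length) : (N + 1) ^ 2 ≤ Fintype.card ι := by
  classical
  set T := {t ∈ range ((P i).length + 1) | (P i).getVert t ∈ C}
  have hT : 2 * (N + 1) ≤ #T := by
    have : (P i).length ≤ 2 * #T :=
      le_two_mul_card_filter_range fun t ht => hcover _ _ ((P i).adj_getVert_succ ht)
    omega
  obtain ⟨A, hAT, B, hBT, hA, hB, hAB⟩ := T.exists_lt_subsets_card_eq hT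
  have hmem : ∀ t ∈ T, t ≤ (P i).length ∧ (P i).getVert t ∈ C := fun t ht => by
    simp only [T, mem_filter, mem_range] at ht
    exact ⟨by omega, ht.2⟩
  have hused : ∀ p ∈ A ×ˢ B, ∃ j, s((P i).getVert p.1, (P i).getVert p.2) ∈ (P j).edges := by
    rintro ⟨a, b⟩ hp
    obtain ⟨ha, hb⟩ := mem_product.1 hp
    have hab := hAB a ha b hb
    have ha' := hmem a (hAT ha)
    have hb' := hmem b (hBT hb)
    refine hP.exists_mem_edges_of_adj i hab hb'.1 (hC ha'.2 hb'.2 fun h => ?_)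
    exact hab.ne (((hP.1.1 i).getVert_eq_getVert_iff (by omega) hb'.1).1 h)
  have : Nonempty ι := ⟨i⟩
  choose! F hF using hused
  calc (N + 1) ^ 2 = #(A ×ˢ B) := by rw [card_product, hA, hB, sq]
    _ ≤ #(univ : Finset ι) :=
      card_le_card_of_injOn F (fun _ _ => mem_coe.2 (mem_univ _))
        (hP.injOn_of_mem_edges hAB (fun b hb => (hmem b (hBT hb)).1) hF)
    _ = Fintype.card ι := card_univ

end IsMinEDPSolution

end EDP

theorem min_edp_solution_path_length_general {V : Type*} (G : SimpleGraph V)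
    (C I : Finset V) (hsplit : IsSplitPartition G C I)
    {k : ℕ} (hquartic : ∃ m : ℕ, m ^ 4 = k)
    (X : Fin k → V × V)
    (P : WalkFamily G X) (hP : IsMinEDPSolution G X P) (i : Fin k) :
    ((P i).length : ℝ) < 4 * Real.sqrt k + 4 := by
  obtain ⟨m, rfl⟩ := hquartic
  have hsqrt : Real.sqrt ((m ^ 4 : ℕ) : ℝ) = ((m ^ 2 : ℕ) : ℝ) := by
    rw [show ((m ^ 4 : ℕ) : ℝ) = ((m ^ 2 : ℕ) : ℝ) ^ 2 by push_cast; ring]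
    exact Real.sqrt_sq (Nat.cast_nonneg _)
  rw [hsqrt]
  by_contra! hlong
  have hcard := hP.sq_le_card_of_le_length (C := (C : Set V)) hsplit.isClique
    (fun _ _ => hsplit.mem_or_mem_of_adj) i (N := m ^ 2) (by exact_mod_cast hlong)
  rw [Fintype.card_fin] at hcard
  nlinarith

/-- Let `k > 8` with `k^(1/4)` a natural number. Then every path of a minimum
EDP solution of a Yes-instance on a split graph with `k` terminal pairs has length
less than `4√k + 4`. -/
theorem min_edp_solution_path_length {V : Type*} [Fintype V] (G : SimpleGraph V)
    (C I : Finset V) (hsplit : IsSplitPartition G C I)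
    {k : ℕ} (hk : 8 < k) (hquartic : ∃ m : ℕ, m ^ 4 = k)
    (X : Fin k → V × V) (hX : ∀ i, (X i).1 ≠ (X i).2)
    (P : WalkFamily G X) (hP : IsMinEDPSolution G X P) (i : Fin k) :
    ((P i).length : ℝ) < 4 * Real.sqrt k + 4 :=
  min_edp_solution_path_length_general G C I hsplit hquartic X P hP i
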